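/- arXiv:2403.08338 — 5 statements merged into one kernel-verified Lean document; each statement's English description precedes it below -/
import Mathlib

section
/- Let β > 1, A₁ > 10, and A₂ = (3^(β/(β-1)) + 10)·A₁. Then (A₁+2)^β + (A₂-1)^β < A₁^β + A₂^β - 1. -/
open Set

private lemma mvt_rpow (β a b : ℝ) (ha : 0 < a) (hab : a < b) (hβ : 1 < β) :
    ∃ c ∈ Set.Ioo a b, b ^ β - a ^ β = β * c ^ (β - 1) * (b - a) := by
  have hderiv : ∀ x ∈ Set.Ioo a b, HasDerivAt (fun x : ℝ => x ^ β) (β * x ^ (β - 1)) x := by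
    intro x hx
    exact Real.hasDerivAt_rpow_const (Or.inr hβ.le)
  have hcont : ContinuousOn (fun x : ℝ => x ^ β) (Set.Icc a b) := by
    intro x hx
    exact (Real.hasDerivAt_rpow_const (p := β) (x := x)
      (Or.inr hβ.le)).continuousAt.continuousWithinAt
  obtain ⟨c, hc, hslope⟩ := exists_hasDerivAt_eq_slope (fun x : ℝ => x ^ β)
    (fun x => β * x ^ (β - 1)) hab hcont hderiv
  refine ⟨c, hc, ?_⟩
  have hb : b - a ≠ 0 := sub_ne_zero.mpr hab.ne'
  field_simp at hslope
  linarith [hslope]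

set_option maxHeartbeats 1000000 in
theorem stmt_2 (β A₁ A₂ : ℝ) (hβ : 1 < β) (hA₁ : 10 < A₁)
    (hA₂ : A₂ = (3 ^ (β / (β - 1)) + 10) * A₁) :
    (A₁ + 2) ^ β + (A₂ - 1) ^ β < A₁ ^ β + A₂ ^ β - 1 := by
  have hs : 0 < β - 1 := by linarith
  set t : ℝ := (3 : ℝ) ^ (β / (β - 1)) with ht
  have ht0 : 0 < t := Real.rpow_pos_of_pos (by norm_num) _
  have hA₁0 : (0 : ℝ) < A₁ := by linarith
  -- MVT on [A₁, A₁+2]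
  obtain ⟨c₁, hc₁, he₁⟩ := mvt_rpow β A₁ (A₁ + 2) hA₁0 (by linarith) hβ
  -- MVT on [A₂-1, A₂]
  have hA₂lb : t * A₁ ≤ A₂ - 1 := by
    rw [hA₂]; nlinarith
  have hA₂1 : 0 < A₂ - 1 := by nlinarith
  obtain ⟨c₂, hc₂, he₂⟩ := mvt_rpow β (A₂ - 1) A₂ hA₂1 (by linarith) hβ
  -- bound c₁ ^ (β-1)
  have hc₁pos : 0 < c₁ := lt_trans hA₁0 hc₁.1
  have hb₁ : c₁ ^ (β - 1) ≤ ((6 : ℝ) / 5 * A₁) ^ (β - 1) := by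
    apply Real.rpow_le_rpow hc₁pos.le _ hs.le
    nlinarith [hc₁.2]
  -- bound c₂ ^ (β-1)
  have hb₂ : (t * A₁) ^ (β - 1) ≤ c₂ ^ (β - 1) := by
    apply Real.rpow_le_rpow (by positivity) _ hs.le
    linarith [hc₂.1]
  -- compute (t * A₁) ^ (β-1) = 3 ^ β * A₁ ^ (β-1)
  have htpow : t ^ (β - 1) = (3 : ℝ) ^ β := by
    rw [ht, ← Real.rpow_mul (by norm_num), div_mul_cancel₀ _ hs.ne']
  have hmul : (t * A₁) ^ (β - 1) = 3 ^ β * A₁ ^ (β - 1) := by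
    rw [Real.mul_rpow ht0.le hA₁0.le, htpow]
  -- key numeric comparison
  have h3 : ((6 : ℝ) / 5) ^ (β - 1) < 3 ^ (β - 1) := by
    apply Real.rpow_lt_rpow (by norm_num) (by norm_num) hs
  have h3b : (3 : ℝ) ^ β = 3 * 3 ^ (β - 1) := by
    rw [← Real.rpow_one_add' (by norm_num) (by linarith)]
    ring_nf
  have hA₁pow : 1 ≤ A₁ ^ (β - 1) := Real.one_le_rpow (by linarith) hs.le
  have h65 : (1 : ℝ) ≤ ((6 : ℝ) / 5) ^ (β - 1) := Real.one_le_rpow (by norm_num) hs.le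
  have hmul65 : ((6 : ℝ) / 5 * A₁) ^ (β - 1) = (6 / 5) ^ (β - 1) * A₁ ^ (β - 1) :=
    Real.mul_rpow (by norm_num) hA₁0.le
  -- combine: 2 * β * c₁^(β-1) + 1 < β * c₂^(β-1)
  have hβ0 : (0 : ℝ) < β := by linarith
  have key : β * c₁ ^ (β - 1) * 2 + 1 < β * c₂ ^ (β - 1) := by
    have h1 : β * c₁ ^ (β - 1) * 2 ≤ 2 * β * ((6 : ℝ) / 5) ^ (β - 1) * A₁ ^ (β - 1) := by
      rw [hmul65] at hb₁; nlinarith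
    have h2 : β * (3 : ℝ) ^ β * A₁ ^ (β - 1) ≤ β * c₂ ^ (β - 1) := by
      rw [hmul] at hb₂; nlinarith
    have h4 : 2 * β * ((6 : ℝ) / 5) ^ (β - 1) * A₁ ^ (β - 1) + 1
        < β * (3 : ℝ) ^ β * A₁ ^ (β - 1) := by
      rw [h3b]
      have huw : 1 * 1 ≤ ((6 : ℝ) / 5) ^ (β - 1) * A₁ ^ (β - 1) :=
        mul_le_mul h65 hA₁pow (by norm_num) (le_trans (by norm_num) h65)
      have e1 : 1 ≤ β * (((6 : ℝ) / 5) ^ (β - 1) * A₁ ^ (β - 1)) := by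
        nlinarith [huw]
      have e2 : 3 * β * (((6 : ℝ) / 5) ^ (β - 1) * A₁ ^ (β - 1))
          < 3 * β * ((3 : ℝ) ^ (β - 1) * A₁ ^ (β - 1)) := by
        apply mul_lt_mul_of_pos_left _ (by positivity)
        exact mul_lt_mul_of_pos_right h3 (by positivity)
      nlinarith [e1, e2]
    linarith
  nlinarith [key, he₁, he₂]
end

section
/- Let β > 1, A₁ > 10, and A₂ = (3^(β/(β-1)) + 10)·A₁. Then (A₁-2)^β + (A₂+1)^β > A₁^β + A₂^β + 1. -/
theorem stmt_3 (β A₁ A₂ : ℝ) (hβ : 1 < β) (hA₁ : 10 < A₁)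
    (hA₂ : A₂ = (3 ^ (β / (β - 1)) + 10) * A₁) :
    (A₁ - 2) ^ β + (A₂ + 1) ^ β > A₁ ^ β + A₂ ^ β + 1 := by
  have hA₁0 : (0:ℝ) < A₁ := by linarith
  have hc0 : (0:ℝ) < 3 ^ (β / (β - 1)) := Real.rpow_pos_of_pos (by norm_num) _
  have hA₂0 : (0:ℝ) < A₂ := by
    rw [hA₂]; positivity
  have hb1 : (0:ℝ) < β - 1 := by linarith
  -- abbreviations
  set s := A₁ ^ (β - 1) with hs
  set t := A₂ ^ (β - 1) with ht
  have hs1 : 1 < s := by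
    rw [hs]
    calc (1:ℝ) = 1 ^ (β - 1) := (Real.one_rpow _).symm
    _ < A₁ ^ (β - 1) := by
        apply Real.rpow_lt_rpow (by norm_num) (by linarith) hb1
  -- (A₂+1)^β ≥ A₂^β + β * t
  have hmul2 : A₂ ^ β / A₂ = t := by
    rw [ht, Real.rpow_sub hA₂0, Real.rpow_one]
  have h1 : A₂ ^ β + β * t ≤ (A₂ + 1) ^ β := by
    have hber : 1 + β * (1 / A₂) ≤ (1 + 1 / A₂) ^ β :=
      one_add_mul_self_le_rpow_one_add (by linarith [one_div_pos.mpr hA₂0]) hβ.le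
    have hrw : A₂ + 1 = A₂ * (1 + 1 / A₂) := by
      field_simp
    calc A₂ ^ β + β * t = A₂ ^ β * (1 + β * (1 / A₂)) := by
          rw [← hmul2]; field_simp
      _ ≤ A₂ ^ β * (1 + 1 / A₂) ^ β := by
          apply mul_le_mul_of_nonneg_left hber (Real.rpow_nonneg hA₂0.le _)
      _ = (A₂ + 1) ^ β := by
          rw [hrw, Real.mul_rpow hA₂0.le (by positivity)]
  -- (A₁-2)^β ≥ A₁^β - 2*β*s
  have hmul1 : A₁ ^ β / A₁ = s := by
    rw [hs, Real.rpow_sub hA₁0, Real.rpow_one]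
  have h2 : A₁ ^ β - 2 * β * s ≤ (A₁ - 2) ^ β := by
    have hber : 1 + β * (-2 / A₁) ≤ (1 + -2 / A₁) ^ β :=
      one_add_mul_self_le_rpow_one_add (by rw [neg_div]; rw [neg_le, neg_neg]; rw [div_le_one hA₁0]; linarith) hβ.le
    have hrw : A₁ - 2 = A₁ * (1 + -2 / A₁) := by field_simp; ring
    calc A₁ ^ β - 2 * β * s = A₁ ^ β * (1 + β * (-2 / A₁)) := by
          rw [← hmul1]; field_simp; ring
      _ ≤ A₁ ^ β * (1 + -2 / A₁) ^ β := by
          apply mul_le_mul_of_nonneg_left hber (Real.rpow_nonneg hA₁0.le _)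
      _ = (A₁ - 2) ^ β := by
          rw [hrw, Real.mul_rpow hA₁0.le]
          have : (0:ℝ) ≤ 1 + -2 / A₁ := by
            rw [neg_div]; rw [le_add_neg_iff_add_le, zero_add, div_le_one hA₁0]; linarith
          exact this
  -- t ≥ 3^β * s
  have h3 : 3 ^ β * s ≤ t := by
    have hpow : ((3:ℝ) ^ (β / (β - 1))) ^ (β - 1) = 3 ^ β := by
      rw [← Real.rpow_mul (by norm_num)]
      congr 1
      field_simp
    have : t = (3 ^ (β / (β - 1)) + 10) ^ (β - 1) * s := by
      rw [ht, hA₂, Real.mul_rpow (by positivity) hA₁0.le, hs]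
    rw [this]
    apply mul_le_mul_of_nonneg_right _ (by positivity)
    rw [← hpow]
    exact Real.rpow_le_rpow (by positivity) (by linarith) hb1.le
  have h4 : (3:ℝ) ≤ 3 ^ β := by
    calc (3:ℝ) = 3 ^ (1:ℝ) := (Real.rpow_one 3).symm
    _ ≤ 3 ^ β := Real.rpow_le_rpow_left_iff (by norm_num) |>.mpr hβ.le
  nlinarith [mul_pos (by linarith : (0:ℝ) < β) (by linarith : (0:ℝ) < s),
    mul_le_mul_of_nonneg_left h3 (by linarith : (0:ℝ) ≤ β),
    mul_lt_mul_of_pos_left hs1 (by linarith : (0:ℝ) < β)]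
end

section
/- Let β > 1, ℓ > 0, A₂ ≥ 4, and let v₂, z₂ be reals with 0 ≤ z₂ - v₂ ≤ ℓ^β. Suppose s, s' ∈ [(A₂-3)·ℓ, (A₂+3)·ℓ] satisfy 0 ≤ z₂ - v₂ + s'^β - s^β ≤ ℓ^β (interpreting both s, s' as positive magnitudes). If additionally b(s') - a(s') and b(s) - a(s) are defined by b(u) - a(u) = (v₂ + ℓ^β - z₂ + u^β)^{1/β} - (v₂ - z₂ + u^β)^{1/β} and both lie in Case 2 of Lemma 2.6 of the paper, then (b(s') - a(s'))/(b(s) - a(s)) ≥ ((A₂-3)^β - 1)^{(β-1)/β} / ((A₂+3)^β + 1)^{(β-1)/β}. -/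
open Real

/-- Upper bound from concavity: `(a+t)^p - a^p ≤ p * a^(p-1) * t`. -/
lemma aux_upper {a t p : ℝ} (ha : 0 < a) (ht : 0 ≤ t) (hp1 : 0 ≤ p) (hp2 : p ≤ 1) :
    (a + t) ^ p - a ^ p ≤ p * a ^ (p - 1) * t := by
  have h1 : a + t = a * (1 + t / a) := by field_simp
  have h2 : (0:ℝ) ≤ 1 + t / a := by positivity
  have h3 : (a + t) ^ p = a ^ p * (1 + t / a) ^ p := by
    rw [h1, Real.mul_rpow ha.le h2]
  have hber : (1 + t / a) ^ p ≤ 1 + p * (t / a) :=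
    rpow_one_add_le_one_add_mul_self (le_trans (by norm_num) (by positivity : (0:ℝ) ≤ t / a)) hp1 hp2
  have h4 : (a + t) ^ p ≤ a ^ p * (1 + p * (t / a)) := by
    rw [h3]
    exact mul_le_mul_of_nonneg_left hber (Real.rpow_nonneg ha.le p)
  have h5 : a ^ (p - 1) = a ^ p / a := by
    rw [Real.rpow_sub ha, Real.rpow_one]
  calc (a + t) ^ p - a ^ p ≤ a ^ p * (1 + p * (t / a)) - a ^ p := by linarith
    _ = p * (a ^ p / a) * t := by field_simp; ring
    _ = p * a ^ (p - 1) * t := by rw [h5]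

/-- Lower bound from concavity: `p * (a+t)^(p-1) * t ≤ (a+t)^p - a^p`. -/
lemma aux_lower {a t p : ℝ} (ha : 0 ≤ a) (ht : 0 ≤ t) (hat : 0 < a + t)
    (hp1 : 0 ≤ p) (hp2 : p ≤ 1) :
    p * (a + t) ^ (p - 1) * t ≤ (a + t) ^ p - a ^ p := by
  set b := a + t with hb
  have hs : -1 ≤ a / b - 1 := by
    have : 0 ≤ a / b := by positivity
    linarith
  have hber : (1 + (a / b - 1)) ^ p ≤ 1 + p * (a / b - 1) :=
    rpow_one_add_le_one_add_mul_self hs hp1 hp2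
  have h1 : (1:ℝ) + (a / b - 1) = a / b := by ring
  rw [h1] at hber
  have h2 : a ^ p = b ^ p * (a / b) ^ p := by
    rw [← Real.mul_rpow hat.le (by positivity)]
    congr 1
    field_simp
  have h3 : a ^ p ≤ b ^ p * (1 + p * (a / b - 1)) := by
    rw [h2]
    exact mul_le_mul_of_nonneg_left hber (Real.rpow_nonneg hat.le p)
  have h5 : b ^ (p - 1) = b ^ p / b := by
    rw [Real.rpow_sub hat, Real.rpow_one]
  have h6 : b ^ p * (1 + p * (a / b - 1)) = b ^ p - p * (b ^ p / b) * t := by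
    field_simp
    ring
  rw [h6] at h3
  rw [h5]
  linarith

theorem stmt_9 (β ℓ A₂ v₂ z₂ s s' : ℝ) (hβ : 1 < β) (hℓ : 0 < ℓ) (hA₂ : 4 ≤ A₂)
    (hz : 0 ≤ z₂ - v₂) (hz' : z₂ - v₂ ≤ ℓ ^ β)
    (hs : s ∈ Set.Icc ((A₂ - 3) * ℓ) ((A₂ + 3) * ℓ))
    (hs' : s' ∈ Set.Icc ((A₂ - 3) * ℓ) ((A₂ + 3) * ℓ))
    (hmem : 0 ≤ z₂ - v₂ + s' ^ β - s ^ β ∧ z₂ - v₂ + s' ^ β - s ^ β ≤ ℓ ^ β)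
    (F : ℝ → ℝ)
    (hF : ∀ u, F u = (v₂ + ℓ ^ β - z₂ + u ^ β) ^ (1 / β) - (v₂ - z₂ + u ^ β) ^ (1 / β)) :
    F s' / F s ≥
      ((A₂ - 3) ^ β - 1) ^ (1 - 1 / β) / ((A₂ + 3) ^ β + 1) ^ (1 - 1 / β) := by
  obtain ⟨hs1, hs2⟩ := hs
  obtain ⟨hs'1, hs'2⟩ := hs'
  have hβ0 : (0:ℝ) < β := by linarith
  set p : ℝ := 1 / β with hp
  have hp0 : 0 < p := by positivity
  have hp1 : p < 1 := by
    rw [hp, div_lt_one hβ0]; linarith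
  set L : ℝ := ℓ ^ β with hL
  have hL0 : 0 < L := Real.rpow_pos_of_pos hℓ β
  set c : ℝ := (A₂ - 3) ^ β - 1 with hc
  set d : ℝ := (A₂ + 3) ^ β + 1 with hd
  have hA1 : (1:ℝ) ≤ A₂ - 3 := by linarith
  have hc0 : 0 ≤ c := by
    have : (1:ℝ) ≤ (A₂ - 3) ^ β := Real.one_le_rpow hA1 hβ0.le
    simpa [hc] using this
  have hd0 : 0 < d := by
    have : (0:ℝ) ≤ (A₂ + 3) ^ β := Real.rpow_nonneg (by linarith) β
    simp only [hd]; linarith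
  set w : ℝ := z₂ - v₂ with hw
  -- bounds on F u for u in the interval
  have key : ∀ u, (A₂ - 3) * ℓ ≤ u → u ≤ (A₂ + 3) * ℓ →
      p * (d * L) ^ (p - 1) * L ≤ F u ∧
      (0 < c → F u ≤ p * (c * L) ^ (p - 1) * L) := by
    intro u hu1 hu2
    have hu0 : 0 < u := lt_of_lt_of_le (by nlinarith) hu1
    set a : ℝ := u ^ β - w with ha
    have hub1 : (A₂ - 3) ^ β * L ≤ u ^ β := by
      rw [hL, ← Real.mul_rpow (by linarith) hℓ.le]
      exact Real.rpow_le_rpow (by positivity) hu1 hβ0.le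
    have hub2 : u ^ β ≤ (A₂ + 3) ^ β * L := by
      rw [hL, ← Real.mul_rpow (by linarith) hℓ.le]
      exact Real.rpow_le_rpow hu0.le hu2 hβ0.le
    have hac : c * L ≤ a := by
      have : w ≤ L := hz'
      simp only [ha, hc]
      nlinarith
    have ha0 : 0 ≤ a := le_trans (by positivity) hac
    have had : a + L ≤ d * L := by
      simp only [ha, hd]
      nlinarith [hz.trans_eq hw.symm.symm, hz]
    have hFu : F u = (a + L) ^ p - a ^ p := by
      rw [hF u, hp]
      congr 1 <;> congr 1 <;> (simp only [ha, hw, hL]; ring)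
    constructor
    · -- lower bound
      have h1 : p * (a + L) ^ (p - 1) * L ≤ (a + L) ^ p - a ^ p :=
        aux_lower ha0 hL0.le (by linarith) hp0.le hp1.le
      have h2 : (d * L) ^ (p - 1) ≤ (a + L) ^ (p - 1) :=
        Real.rpow_le_rpow_of_nonpos (by linarith) had (by linarith)
      rw [hFu]
      calc p * (d * L) ^ (p - 1) * L ≤ p * (a + L) ^ (p - 1) * L := by
            apply mul_le_mul_of_nonneg_right _ hL0.le
            exact mul_le_mul_of_nonneg_left h2 hp0.le
        _ ≤ _ := h1
    · -- upper bound
      intro hcpos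
      have ha0' : 0 < a := lt_of_lt_of_le (by positivity) hac
      have h1 : (a + L) ^ p - a ^ p ≤ p * a ^ (p - 1) * L :=
        aux_upper ha0' hL0.le hp0.le hp1.le
      have h2 : a ^ (p - 1) ≤ (c * L) ^ (p - 1) :=
        Real.rpow_le_rpow_of_nonpos (by positivity) hac (by linarith)
      rw [hFu]
      calc (a + L) ^ p - a ^ p ≤ p * a ^ (p - 1) * L := h1
        _ ≤ p * (c * L) ^ (p - 1) * L := by
            apply mul_le_mul_of_nonneg_right _ hL0.le
            exact mul_le_mul_of_nonneg_left h2 hp0.le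
  have hN0 : 0 < p * (d * L) ^ (p - 1) * L := by positivity
  obtain ⟨hFs'lb, hFs'ub⟩ := key s' hs'1 hs'2
  obtain ⟨hFslb, hFsub⟩ := key s hs1 hs2
  rcases eq_or_lt_of_le hc0 with hczero | hcpos
  · -- c = 0 : RHS is 0
    have : c ^ (1 - p) = 0 := by
      rw [← hczero]
      exact Real.zero_rpow (by linarith)
    rw [ge_iff_le, hp] at *
    rw [this, zero_div]
    exact div_nonneg (le_trans hN0.le hFs'lb) (le_trans hN0.le hFslb)
  · have hFsub' := hFsub hcpos
    have hFs0 : 0 < F s := lt_of_lt_of_le hN0 hFslb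
    have hD0 : 0 < p * (c * L) ^ (p - 1) * L := by positivity
    have main : p * (d * L) ^ (p - 1) * L / (p * (c * L) ^ (p - 1) * L) ≤ F s' / F s :=
      div_le_div₀ (le_trans hN0.le hFs'lb) hFs'lb hFs0 hFsub'
    have heq : p * (d * L) ^ (p - 1) * L / (p * (c * L) ^ (p - 1) * L)
        = c ^ (1 - p) / d ^ (1 - p) := by
      rw [Real.mul_rpow hd0.le hL0.le, Real.mul_rpow hcpos.le hL0.le]
      have e1 : c ^ (1 - p) = (c ^ (p - 1))⁻¹ := by
        rw [show (1 - p) = -(p - 1) by ring, Real.rpow_neg hcpos.le]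
      have e2 : d ^ (1 - p) = (d ^ (p - 1))⁻¹ := by
        rw [show (1 - p) = -(p - 1) by ring, Real.rpow_neg hd0.le]
      have hcp : 0 < c ^ (p - 1) := Real.rpow_pos_of_pos hcpos _
      have hdp : 0 < d ^ (p - 1) := Real.rpow_pos_of_pos hd0 _
      have hLp : 0 < L ^ (p - 1) := Real.rpow_pos_of_pos hL0 _
      rw [e1, e2]
      field_simp
    rw [ge_iff_le, ← heq]
    exact main
end

section
/- Van der Corput's lemma (first derivative version): Let φ, ψ : [a,b] → ℝ with φ differentiable, φ' monotone on [a,b], and |φ'(t)| ≥ λ > 0 for all t ∈ [a,b], and ψ continuously differentiable. Then |∫ₐᵇ e^{iφ(t)} ψ(t) dt| ≤ C·λ^{-1}·(‖ψ‖_{L^∞([a,b])} + ‖ψ'‖_{L¹([a,b])}) for an absolute constant C. -/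
/-!
Write `e^{iφ} = (φ')⁻¹ • (e^{iφ} φ')`. On every subinterval the integral of `e^{iφ} φ'` is the
increment of `-i e^{iφ}`, so it has norm at most `2`. The weight `(φ')⁻¹` is monotone with values
in `[0, λ⁻¹]`; writing it as `∫₀^{λ⁻¹} 1[s ≤ (φ' t)⁻¹] ds` and exchanging the integrals turns
`∫ e^{iφ}` into an average over `s` of integrals of `e^{iφ} φ'` over superlevel sets of `(φ')⁻¹`,
which are intervals. Hence `‖∫ e^{iφ}‖ ≤ 2 λ⁻¹`. By Darboux's theorem `φ'` has constant sign, and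
complex conjugation reduces `φ' ≤ -λ` to `φ' ≥ λ`. Integrating by parts against the primitive of
`e^{iφ}` then brings in the amplitude `ψ`.
-/

open MeasureTheory Set Complex ComplexConjugate

theorem IntervalIntegrable.cexp_I_mul_mul {φ φ' : ℝ → ℝ} {c d : ℝ}
    (hφ : ContinuousOn φ (uIcc c d)) (hφ' : IntervalIntegrable φ' volume c d) :
    IntervalIntegrable (fun t ↦ exp (I * φ t) * φ' t) volume c d :=
  IntervalIntegrable.continuousOn_mul ⟨hφ'.1.ofReal, hφ'.2.ofReal⟩ <|
    (continuous_exp.comp (continuous_const.mul continuous_ofReal)).comp_continuousOn hφ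

theorem norm_integral_cexp_I_mul_mul_deriv_le_two {φ φ' : ℝ → ℝ} {c d : ℝ}
    (hφ : ∀ t ∈ uIcc c d, HasDerivAt φ (φ' t) t) (hφ' : IntervalIntegrable φ' volume c d) :
    ‖∫ t in c..d, exp (I * φ t) * φ' t‖ ≤ 2 := by
  have hprim : ∀ t ∈ uIcc c d,
      HasDerivAt (fun u ↦ -I * exp (I * φ u)) (exp (I * φ t) * φ' t) t := fun t ht ↦ by
    convert (((hφ t ht).ofReal_comp.const_mul I).cexp.const_mul (-I)) using 1
    · rfl
    linear_combination (exp (I * φ t) * φ' t) * I_mul_I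
  rw [intervalIntegral.integral_eq_sub_of_hasDerivAt hprim
    (.cexp_I_mul_mul (HasDerivAt.continuousOn hφ) hφ')]
  calc _ ≤ ‖-I * exp (I * φ d)‖ + ‖-I * exp (I * φ c)‖ := norm_sub_le _ _
    _ = 2 := by simp only [norm_mul, norm_neg, norm_I, norm_exp_I_mul_ofReal]; norm_num

theorem norm_integral_cexp_neg_I_mul (φ : ℝ → ℝ) (a b : ℝ) :
    ‖∫ t in a..b, exp (-I * φ t)‖ = ‖∫ t in a..b, exp (I * φ t)‖ := by
  have : ∀ t, exp (-I * φ t) = conj (exp (I * φ t)) := fun t ↦ by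
    rw [← exp_conj, map_mul, conj_I, conj_ofReal]
  simp_rw [this, intervalIntegral.intervalIntegral_conj, RCLike.norm_conj]

theorem le_deriv_or_deriv_le_neg_of_le_abs {φ φ' : ℝ → ℝ} {a b lam : ℝ} (hlam : 0 < lam)
    (hφ : ∀ t ∈ Icc a b, HasDerivAt φ (φ' t) t) (habs : ∀ t ∈ Icc a b, lam ≤ |φ' t|) :
    (∀ t ∈ Icc a b, lam ≤ φ' t) ∨ ∀ t ∈ Icc a b, φ' t ≤ -lam := by
  by_contra! ⟨⟨t₁, ht₁, h₁⟩, t₂, ht₂, h₂⟩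
  have hd : (φ' '' Icc a b).OrdConnected :=
    ordConnected_Icc.image_hasDerivWithinAt fun t ht ↦ (hφ t ht).hasDerivWithinAt
  have h₁' : φ' t₁ ≤ -lam := by
    cases le_abs'.1 (habs t₁ ht₁) <;> linarith
  have h₂' : lam ≤ φ' t₂ := by
    cases le_abs'.1 (habs t₂ ht₂) <;> linarith
  obtain ⟨t, ht, h0⟩ := hd.out (mem_image_of_mem φ' ht₁) (mem_image_of_mem φ' ht₂)
    (show (0 : ℝ) ∈ Icc (φ' t₁) (φ' t₂) from ⟨by linarith, by linarith⟩)
  have := habs t ht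
  rw [h0, abs_zero] at this
  linarith

theorem QuasiconcaveOn.measurable_indicator {g : ℝ → ℝ} {s : Set ℝ}
    (hg : QuasiconcaveOn ℝ s g) (hs : MeasurableSet s) : Measurable (s.indicator g) := by
  refine measurable_of_Ici fun r ↦ ?_
  have hsup : MeasurableSet {x ∈ s | r ≤ g x} := (convex_iff_ordConnected.1 (hg r)).measurableSet
  have : s.indicator g ⁻¹' Ici r = {x ∈ s | r ≤ g x} ∪ {x | x ∉ s ∧ r ≤ 0} := by
    ext x
    by_cases hx : x ∈ s <;> simp [hx]
  rw [this]
  exact hsup.union (hs.compl.inter (MeasurableSet.const _))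

section

variable {E : Type*} [NormedAddCommGroup E] [NormedSpace ℝ E]

theorem norm_setIntegral_le_of_ordConnected {f : ℝ → E} {a b A : ℝ} {D : Set ℝ} (hA : 0 ≤ A)
    (hfA : ∀ c d, a ≤ c → c ≤ d → d ≤ b → ‖∫ t in c..d, f t‖ ≤ A)
    (hD : D.OrdConnected) (hDab : D ⊆ Icc a b) : ‖∫ t in D, f t‖ ≤ A := by
  rcases D.eq_empty_or_nonempty with rfl | hne
  · simpa using hA
  have hbdd : BddBelow D ∧ BddAbove D := ⟨bddBelow_Icc.mono hDab, bddAbove_Icc.mono hDab⟩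
  have hDI := subset_Icc_csInf_csSup hbdd.1 hbdd.2
  have hID : Ioo (sInf D) (sSup D) ⊆ D :=
    IsConnected.Ioo_csInf_csSup_subset ⟨hne, isPreconnected_iff_ordConnected.2 hD⟩ hbdd.1 hbdd.2
  have hae : Ioo (sInf D) (sSup D) =ᵐ[volume] D := by
    refine ae_eq_of_subset_of_measure_ge hID ?_ measurableSet_Ioo.nullMeasurableSet
      ((measure_mono hDI).trans_lt measure_Icc_lt_top).ne
    rw [Real.volume_Ioo, ← Real.volume_Icc]
    exact measure_mono hDI
  have hle : sInf D ≤ sSup D := csInf_le_csSup hne hbdd.1 hbdd.2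
  rw [← setIntegral_congr_set hae, ← integral_Ioc_eq_integral_Ioo,
    ← intervalIntegral.integral_of_le hle]
  exact hfA _ _ (le_csInf hne fun y hy ↦ (hDab hy).1) hle (csSup_le hne fun y hy ↦ (hDab hy).2)

variable [CompleteSpace E]

theorem norm_integral_smul_le_of_quasiconcaveOn {f : ℝ → E} {g : ℝ → ℝ}
    {a b A M : ℝ} (hab : a ≤ b) (hf : IntegrableOn f (Icc a b))
    (hfA : ∀ c d, a ≤ c → c ≤ d → d ≤ b → ‖∫ t in c..d, f t‖ ≤ A)
    (hg : QuasiconcaveOn ℝ (Icc a b) g) (hg0 : ∀ t ∈ Icc a b, 0 ≤ g t)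
    (hgM : ∀ t ∈ Icc a b, g t ≤ M) :
    ‖∫ t in a..b, g t • f t‖ ≤ A * M := by
  have hA : 0 ≤ A := by simpa using hfA a a le_rfl le_rfl hab
  have hM : 0 ≤ M := (hg0 a ⟨le_rfl, hab⟩).trans (hgM a ⟨le_rfl, hab⟩)
  set G := (Icc a b).indicator g
  have hG : Measurable G := hg.measurable_indicator measurableSet_Icc
  -- `g t = ∫ s in Ioc 0 M, 1 [s ≤ g t]`; integrate first in `t` over each superlevel set of `g`
  let F : ℝ → ℝ → E := fun t s ↦ (Iic (G t)).indicator (fun _ ↦ f t) s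
  have hF : Integrable (Function.uncurry F)
      ((volume.restrict (Icc a b)).prod (volume.restrict (Ioc 0 M))) :=
    (hf.comp_fst _).indicator (measurableSet_le measurable_snd (hG.comp measurable_fst))
  have hslice : ∀ t ∈ Icc a b, ∫ s in Ioc 0 M, F t s = g t • f t := fun t ht ↦ by
    have : Iic (g t) ∩ Ioc 0 M = Ioc 0 (g t) := by
      rw [inter_comm, Ioc_inter_Iic, inf_eq_right.2 (hgM t ht)]
    simp only [F, G, indicator_of_mem ht]
    rw [integral_indicator measurableSet_Iic, Measure.restrict_restrict measurableSet_Iic,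
      setIntegral_const, this, Real.volume_real_Ioc_of_le (hg0 t ht), sub_zero]
  have hlevel : ∀ s, ‖∫ t in Icc a b, F t s‖ ≤ A := fun s ↦ by
    have hmeas : MeasurableSet {t | s ≤ G t} := measurableSet_le measurable_const hG
    have hset : {t | s ≤ G t} ∩ Icc a b = {t ∈ Icc a b | s ≤ g t} := by
      ext t
      rw [mem_inter_iff, mem_ofPred_eq, mem_sep_iff, and_comm]
      exact and_congr_right fun ht ↦ by simp only [G, indicator_of_mem ht]
    have hFs : (fun t ↦ F t s) = {t | s ≤ G t}.indicator f := by
      ext t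
      simp only [F, indicator, mem_Iic, mem_ofPred_eq]
    rw [hFs, integral_indicator hmeas, Measure.restrict_restrict hmeas, hset]
    exact norm_setIntegral_le_of_ordConnected hA hfA (convex_iff_ordConnected.1 (hg s))
      (sep_subset _ _)
  calc ‖∫ t in a..b, g t • f t‖ = ‖∫ s in Ioc 0 M, ∫ t in Icc a b, F t s‖ := by
        rw [intervalIntegral.integral_of_le hab, ← integral_Icc_eq_integral_Ioc,
          ← integral_integral_swap hF, setIntegral_congr_fun measurableSet_Icc hslice]
    _ ≤ A * volume.real (Ioc 0 M) :=
        norm_setIntegral_le_of_norm_le_const measure_Ioc_lt_top fun s _ ↦ hlevel s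
    _ = A * M := by rw [Real.volume_real_Ioc_of_le hM, sub_zero]

theorem norm_integral_smul_le_of_norm_primitive_le {f : ℝ → E} {ψ ψ' : ℝ → ℝ} {a b B : ℝ}
    (hab : a ≤ b) (hf : ContinuousOn f (Icc a b)) (hψ : ∀ t ∈ Icc a b, HasDerivAt ψ (ψ' t) t)
    (hψ' : IntervalIntegrable ψ' volume a b) (hB : ∀ x ∈ Icc a b, ‖∫ t in a..x, f t‖ ≤ B) :
    ‖∫ t in a..b, ψ t • f t‖ ≤ B * (|ψ b| + ∫ t in a..b, |ψ' t|) := by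
  set Φ : ℝ → E := fun x ↦ ∫ t in a..x, f t
  have hfi : IntegrableOn f (uIcc a b) := by rw [uIcc_of_le hab]; exact hf.integrableOn_Icc
  have hΦ : ∀ x ∈ Ioo (min a b) (max a b), HasDerivAt Φ (f x) x := by
    intro x hx
    rw [min_eq_left hab, max_eq_right hab] at hx
    exact intervalIntegral.integral_hasDerivAt_right
      ((hf.mono (Icc_subset_Icc_right hx.2.le)).intervalIntegrable_of_Icc hx.1.le)
      ((hf.mono Ioo_subset_Icc_self).stronglyMeasurableAtFilter isOpen_Ioo x hx)
      (hf.continuousAt (Icc_mem_nhds hx.1 hx.2))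
  have hparts := intervalIntegral.integral_smul_deriv_eq_deriv_smul_of_hasDerivAt (v := Φ)
    (uIcc_of_le hab ▸ HasDerivAt.continuousOn hψ)
    (intervalIntegral.continuousOn_primitive_interval hfi)
    (fun x hx ↦ hψ x (Ioo_subset_Icc_self (by rwa [min_eq_left hab, max_eq_right hab] at hx)))
    hΦ hψ' hfi.intervalIntegrable
  have hΦa : Φ a = 0 := intervalIntegral.integral_same
  have hrest : ‖∫ t in a..b, ψ' t • Φ t‖ ≤ B * ∫ t in a..b, |ψ' t| := by
    rw [← intervalIntegral.integral_const_mul]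
    refine intervalIntegral.norm_integral_le_of_norm_le hab (ae_of_all _ fun t ht ↦ ?_)
      (hψ'.abs.const_mul B)
    rw [norm_smul, Real.norm_eq_abs, mul_comm]
    exact mul_le_mul_of_nonneg_right (hB t (Ioc_subset_Icc_self ht)) (abs_nonneg _)
  rw [hparts, hΦa, smul_zero, sub_zero]
  calc _ ≤ ‖ψ b • Φ b‖ + ‖∫ t in a..b, ψ' t • Φ t‖ := norm_sub_le _ _
    _ ≤ |ψ b| * B + B * ∫ t in a..b, |ψ' t| := by
        rw [norm_smul, Real.norm_eq_abs]
        gcongr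
        exact hB b ⟨hab, le_rfl⟩
    _ = B * (|ψ b| + ∫ t in a..b, |ψ' t|) := by ring

end

theorem norm_integral_cexp_I_mul_le_of_le_deriv {φ φ' : ℝ → ℝ} {a b lam : ℝ} (hab : a ≤ b)
    (hlam : 0 < lam) (hφ : ∀ t ∈ Icc a b, HasDerivAt φ (φ' t) t)
    (hm : MonotoneOn φ' (Icc a b) ∨ AntitoneOn φ' (Icc a b)) (hpos : ∀ t ∈ Icc a b, lam ≤ φ' t) :
    ‖∫ t in a..b, exp (I * φ t)‖ ≤ 2 * lam⁻¹ := by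
  have hφ'pos : ∀ t ∈ Icc a b, 0 < φ' t := fun t ht ↦ hlam.trans_le (hpos t ht)
  have hint : ∀ c d, a ≤ c → c ≤ d → d ≤ b → IntervalIntegrable φ' volume c d := by
    intro c d hc hcd hd
    have hsub : uIcc c d ⊆ Icc a b := by rw [uIcc_of_le hcd]; exact Icc_subset_Icc hc hd
    rcases hm with h | h
    exacts [(h.mono hsub).intervalIntegrable, (h.mono hsub).intervalIntegrable]
  have hquasi : QuasiconcaveOn ℝ (Icc a b) fun t ↦ (φ' t)⁻¹ := by
    rcases hm with h | h
    · exact AntitoneOn.quasiconcaveOn (fun s hs t ht hst ↦ inv_anti₀ (hφ'pos s hs) (h hs ht hst))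
        (convex_Icc a b)
    · exact MonotoneOn.quasiconcaveOn (fun s hs t ht hst ↦ inv_anti₀ (hφ'pos t ht) (h hs ht hst))
        (convex_Icc a b)
  have hcongr : ∀ t ∈ uIcc a b, exp (I * φ t) = (φ' t)⁻¹ • (exp (I * φ t) * φ' t) := by
    intro t ht
    rw [uIcc_of_le hab] at ht
    have : (φ' t : ℂ) ≠ 0 := ofReal_ne_zero.2 (hφ'pos t ht).ne'
    rw [real_smul, ofReal_inv]
    field_simp
  rw [intervalIntegral.integral_congr hcongr]
  refine norm_integral_smul_le_of_quasiconcaveOn hab ?_ ?_ hquasi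
    (fun t ht ↦ (inv_pos.2 (hφ'pos t ht)).le) (fun t ht ↦ inv_anti₀ hlam (hpos t ht))
  · refine (intervalIntegrable_iff_integrableOn_Icc_of_le hab).1 <|
      .cexp_I_mul_mul ?_ (hint a b le_rfl hab le_rfl)
    exact uIcc_of_le hab ▸ HasDerivAt.continuousOn hφ
  · intro c d hc hcd hd
    refine norm_integral_cexp_I_mul_mul_deriv_le_two (fun t ht ↦ hφ t ?_) (hint c d hc hcd hd)
    rw [uIcc_of_le hcd] at ht
    exact ⟨hc.trans ht.1, ht.2.trans hd⟩

theorem norm_integral_cexp_I_mul_le {φ φ' : ℝ → ℝ} {a b lam : ℝ} (hab : a ≤ b)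
    (hlam : 0 < lam) (hφ : ∀ t ∈ Icc a b, HasDerivAt φ (φ' t) t)
    (hm : MonotoneOn φ' (Icc a b) ∨ AntitoneOn φ' (Icc a b))
    (habs : ∀ t ∈ Icc a b, lam ≤ |φ' t|) :
    ‖∫ t in a..b, exp (I * φ t)‖ ≤ 2 * lam⁻¹ := by
  rcases le_deriv_or_deriv_le_neg_of_le_abs hlam hφ habs with hpos | hneg
  · exact norm_integral_cexp_I_mul_le_of_le_deriv hab hlam hφ hm hpos
  · rw [← norm_integral_cexp_neg_I_mul]
    simpa [neg_mul, mul_neg] using norm_integral_cexp_I_mul_le_of_le_deriv (φ := fun t ↦ -φ t)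
      hab hlam (fun t ht ↦ (hφ t ht).neg) (hm.symm.imp AntitoneOn.neg MonotoneOn.neg)
      fun t ht ↦ le_neg.1 (hneg t ht)

theorem stmt_14 :
    ∃ C : ℝ, 0 < C ∧
      ∀ (a b lam : ℝ) (φ φ' ψ ψ' : ℝ → ℝ),
        a ≤ b → 0 < lam →
        (∀ t ∈ Set.Icc a b, HasDerivAt φ (φ' t) t) →
        (MonotoneOn φ' (Set.Icc a b) ∨ AntitoneOn φ' (Set.Icc a b)) →
        (∀ t ∈ Set.Icc a b, lam ≤ |φ' t|) →
        (∀ t ∈ Set.Icc a b, HasDerivAt ψ (ψ' t) t) →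
        ContinuousOn ψ' (Set.Icc a b) →
        ‖∫ t in a..b, Complex.exp (Complex.I * (φ t : ℂ)) * (ψ t : ℂ)‖ ≤
          C * lam⁻¹ * ((⨆ t : Set.Icc a b, |ψ (t : ℝ)|) + ∫ t in a..b, |ψ' t|) := by
  refine ⟨2, two_pos, fun a b lam φ φ' ψ ψ' hab hlam hφ hm habs hψ hψ' ↦ ?_⟩
  have hprimitive : ∀ x ∈ Icc a b, ‖∫ t in a..x, exp (I * φ t)‖ ≤ 2 * lam⁻¹ := fun x hx ↦
    have hsub : Icc a x ⊆ Icc a b := Icc_subset_Icc_right hx.2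
    norm_integral_cexp_I_mul_le hx.1 hlam (fun t ht ↦ hφ t (hsub ht))
      (hm.imp (·.mono hsub) (·.mono hsub)) fun t ht ↦ habs t (hsub ht)
  have hbdd : BddAbove (range fun t : Icc a b ↦ |ψ t|) := by
    rw [← image_eq_range (fun t ↦ |ψ t|)]
    exact isCompact_Icc.bddAbove_image (HasDerivAt.continuousOn hψ).abs
  have hsup : |ψ b| ≤ ⨆ t : Icc a b, |ψ t| := le_ciSup hbdd ⟨b, hab, le_rfl⟩
  calc ‖∫ t in a..b, exp (I * φ t) * ψ t‖ = ‖∫ t in a..b, ψ t • exp (I * φ t)‖ := by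
        simp_rw [real_smul, mul_comm]
    _ ≤ 2 * lam⁻¹ * (|ψ b| + ∫ t in a..b, |ψ' t|) :=
        norm_integral_smul_le_of_norm_primitive_le hab
          (continuousOn_const.mul (continuous_ofReal.comp_continuousOn
            (HasDerivAt.continuousOn hφ))).cexp hψ (hψ'.intervalIntegrable_of_Icc hab) hprimitive
    _ ≤ 2 * lam⁻¹ * ((⨆ t : Icc a b, |ψ t|) + ∫ t in a..b, |ψ' t|) := by gcongr
end

section
/- Let β > 1, A₁ > 10, C_β = 3^(β/(β-1)) + 10, A₂ = C_β·A₁, and suppose h, ξ₁, ξ₂, ℓ > 0 satisfy ξ₁ ∈ ((A₁-2)ℓ, (A₁+2)ℓ), ξ₂ ∈ ((A₂-3)ℓ, (A₂+3)ℓ), and β·h·ξ₁^{β-1} = -ℓ^β + β·(h-ℓ)·ξ₂^{β-1}. Then h = (ℓ^β + β·ℓ·ξ₂^{β-1})/(β·(ξ₂^{β-1} - ξ₁^{β-1})), and h/ℓ is bounded above and below by constants depending only on β (for A₁ large enough): h/ℓ ≍ (A₁^{1-β} + β·C_β^{β-1})/(β·(C_β^{β-1} - 1)). -/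
set_option maxHeartbeats 1000000


theorem stmt_17 (β : ℝ) (hβ : 1 < β) :
    ∃ c₁ c₂ A₀ : ℝ, 0 < c₁ ∧ 0 < c₂ ∧
      ∀ A₁ h ℓ ξ₁ ξ₂ : ℝ, A₀ ≤ A₁ → 10 < A₁ → 0 < ℓ → 0 < h →
        ξ₁ ∈ Set.Ioo ((A₁ - 2) * ℓ) ((A₁ + 2) * ℓ) →
        ξ₂ ∈ Set.Ioo (((3 ^ (β / (β - 1)) + 10) * A₁ - 3) * ℓ)
          (((3 ^ (β / (β - 1)) + 10) * A₁ + 3) * ℓ) →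
        β * h * ξ₁ ^ (β - 1) = -ℓ ^ β + β * (h - ℓ) * ξ₂ ^ (β - 1) →
        h = (ℓ ^ β + β * ℓ * ξ₂ ^ (β - 1)) / (β * (ξ₂ ^ (β - 1) - ξ₁ ^ (β - 1))) ∧
        c₁ * ((A₁ ^ (1 - β) + β * (3 ^ (β / (β - 1)) + 10) ^ (β - 1)) /
            (β * ((3 ^ (β / (β - 1)) + 10) ^ (β - 1) - 1))) ≤ h / ℓ ∧
        h / ℓ ≤ c₂ * ((A₁ ^ (1 - β) + β * (3 ^ (β / (β - 1)) + 10) ^ (β - 1)) /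
            (β * ((3 ^ (β / (β - 1)) + 10) ^ (β - 1) - 1))) := by
  have he : (0:ℝ) < β - 1 := by linarith
  have hβ0 : (0:ℝ) < β := by linarith
  have hs1 : (6:ℝ) ^ (1 - β) < 1 :=
    Real.rpow_lt_one_of_one_lt_of_neg (by norm_num) (by linarith)
  have hs0 : (0:ℝ) < 6 ^ (1 - β) := Real.rpow_pos_of_pos (by norm_num) _
  have hδ : (0:ℝ) < 1 - 6 ^ (1 - β) := by linarith
  refine ⟨1/3, 2 / (1 - 6 ^ (1 - β)), 100, by norm_num, div_pos (by norm_num) hδ, ?_⟩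
  intro A₁ h ℓ ξ₁ ξ₂ hA₀ hA10 hℓ hh hξ₁ hξ₂ heq
  obtain ⟨h1l, h1r⟩ := hξ₁
  obtain ⟨h2l, h2r⟩ := hξ₂
  set C : ℝ := 3 ^ (β / (β - 1)) + 10 with hCdef
  -- C > 13
  have hC13 : (13:ℝ) < C := by
    have h1 : (1:ℝ) < β / (β - 1) := (one_lt_div he).2 (by linarith)
    have h2 := Real.rpow_lt_rpow_of_exponent_lt (by norm_num : (1:ℝ) < 3) h1
    rw [Real.rpow_one] at h2
    simp only [hCdef]; linarith
  -- C ^ (β-1) > 3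
  have hCe3 : (3:ℝ) < C ^ (β - 1) := by
    have h3β : (3:ℝ) ^ β = (3 ^ (β / (β - 1))) ^ (β - 1) := by
      rw [← Real.rpow_mul (by norm_num), div_mul_cancel₀ _ (ne_of_gt he)]
    have hle : (3:ℝ) ^ (β / (β - 1)) ≤ C := by simp only [hCdef]; linarith
    have h1 : ((3:ℝ) ^ (β / (β - 1))) ^ (β - 1) ≤ C ^ (β - 1) :=
      Real.rpow_le_rpow (le_of_lt (Real.rpow_pos_of_pos (by norm_num) _)) hle he.le
    have h2 : (3:ℝ) < 3 ^ β := by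
      have h4 := Real.rpow_lt_rpow_of_exponent_lt (by norm_num : (1:ℝ) < 3) hβ
      rwa [Real.rpow_one] at h4
    linarith [h3β ▸ h1]
  -- positivity of ξ's
  have hξ₁pos : 0 < ξ₁ := by nlinarith [mul_pos (show (0:ℝ) < A₁ - 2 by linarith) hℓ]
  have hξ₂pos : 0 < ξ₂ := by
    nlinarith [mul_pos (show (0:ℝ) < C * A₁ - 3 by nlinarith) hℓ]
  -- 6 ξ₁ ≤ ξ₂
  have h6 : 6 * ξ₁ ≤ ξ₂ := by
    have hmid : 6 * (A₁ + 2) ≤ C * A₁ - 3 := by nlinarith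
    nlinarith [mul_le_mul_of_nonneg_right hmid hℓ.le]
  set u : ℝ := ξ₁ ^ (β - 1) with hudef
  set v : ℝ := ξ₂ ^ (β - 1) with hvdef
  have hu_pos : 0 < u := Real.rpow_pos_of_pos hξ₁pos _
  have hv_pos : 0 < v := Real.rpow_pos_of_pos hξ₂pos _
  -- u ≤ 6^(1-β) v
  have hu_le : u ≤ 6 ^ (1 - β) * v := by
    have h1 : ξ₁ ≤ ξ₂ / 6 := by linarith
    have h2 : u ≤ (ξ₂ / 6) ^ (β - 1) := Real.rpow_le_rpow hξ₁pos.le h1 he.le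
    have h3 : (ξ₂ / 6) ^ (β - 1) = v / 6 ^ (β - 1) :=
      Real.div_rpow hξ₂pos.le (by norm_num) _
    have h4 : (6:ℝ) ^ (1 - β) = (6 ^ (β - 1))⁻¹ := by
      rw [show (1 - β) = -(β - 1) by ring, Real.rpow_neg (by norm_num)]
    rw [h4]
    calc u ≤ v / 6 ^ (β - 1) := h3 ▸ h2
    _ = (6 ^ (β-1))⁻¹ * v := by rw [div_eq_inv_mul]
  have h6e : (0:ℝ) < 6 ^ (β - 1) := Real.rpow_pos_of_pos (by norm_num) _
  have hvu : 0 < v - u := by nlinarith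
  have hD : 0 < β * (v - u) := mul_pos hβ0 hvu
  -- the formula for h
  have key : h * (β * (v - u)) = ℓ ^ β + β * ℓ * v := by linear_combination -heq
  have hform : h = (ℓ ^ β + β * ℓ * v) / (β * (v - u)) := (eq_div_iff (ne_of_gt hD)).2 key
  -- useful facts
  have hℓβ : ℓ ^ β = ℓ ^ (β - 1) * ℓ := by
    have h5 := Real.rpow_add_one hℓ.ne' (β - 1)
    rw [sub_add_cancel] at h5
    exact h5
  have hℓβpos : 0 < ℓ ^ β := Real.rpow_pos_of_pos hℓ _
  have hℓev : ℓ ^ (β - 1) ≤ v := by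
    have hCA : (1:ℝ) ≤ C * A₁ - 3 := by
      nlinarith [mul_pos (show (0:ℝ) < C - 13 by linarith) (show (0:ℝ) < A₁ - 10 by linarith)]
    have hlξ : ℓ ≤ ξ₂ := le_trans ((le_mul_iff_one_le_left hℓ).2 hCA) h2l.le
    exact Real.rpow_le_rpow hℓ.le hlξ he.le
  have hA1e : 0 < A₁ ^ (1 - β) := Real.rpow_pos_of_pos (by linarith) _
  have hA1e1 : A₁ ^ (1 - β) ≤ 1 :=
    Real.rpow_le_one_of_one_le_of_nonpos (by linarith) (by linarith)
  have hTden : 0 < β * (C ^ (β - 1) - 1) := mul_pos hβ0 (by linarith)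
  set T : ℝ := (A₁ ^ (1 - β) + β * C ^ (β - 1)) / (β * (C ^ (β - 1) - 1)) with hTdef
  have hT1 : 1 ≤ T := by
    rw [hTdef, le_div_iff₀ hTden]; nlinarith
  have hT3 : T ≤ 3 := by
    rw [hTdef, div_le_iff₀ hTden]; nlinarith
  -- 1 ≤ h / ℓ
  have hhl1 : 1 ≤ h / ℓ := by
    rw [le_div_iff₀ hℓ, hform, one_mul, le_div_iff₀ hD]
    nlinarith [mul_pos hℓ hu_pos]
  -- h / ℓ ≤ 2 / (1 - 6^(1-β))
  have hhl2 : h / ℓ ≤ 2 / (1 - 6 ^ (1 - β)) := by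
    rw [div_le_div_iff₀ hℓ hδ, hform, div_mul_eq_mul_div, div_le_iff₀ hD]
    have h1 : ℓ ^ β ≤ ℓ * v := by nlinarith
    have h2 : u ≤ 6 ^ (1 - β) * v := hu_le
    nlinarith [mul_le_mul_of_nonneg_left h2 (mul_pos hβ0 hℓ).le,
      mul_le_mul_of_nonneg_right h1 hδ.le,
      mul_nonneg (mul_nonneg he.le (mul_pos hℓ hv_pos).le) hδ.le]
  refine ⟨hform, ?_, ?_⟩
  · calc (1/3) * T ≤ (1/3) * 3 := by linarith
    _ ≤ h / ℓ := by linarith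
  · calc h / ℓ ≤ 2 / (1 - 6 ^ (1 - β)) * 1 := by linarith [hhl2]
    _ ≤ 2 / (1 - 6 ^ (1 - β)) * T := by
        exact mul_le_mul_of_nonneg_left hT1 (div_pos (by norm_num) hδ).le
end
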